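/- Let R be a finite noncommutative ring with |R| ≠ 16 and |R| ≠ 18, and let r ∈ K(R). Then Δ_R^r has no vertex of degree 3. -/

import Mathlib

/-- The `r`-noncommuting graph of a finite ring `R`: vertices are elements of `R`,
and distinct `x`, `y` are adjacent iff `x*y - y*x ≠ r` and `x*y - y*x ≠ -r`. -/
def ncGraph {R : Type*} [NonUnitalRing R] (r : R) : SimpleGraph R where
  Adj x y := x ≠ y ∧ x * y - y * x ≠ r ∧ x * y - y * x ≠ -r
  symm := ⟨by
    rintro x y ⟨h1, h2, h3⟩
    refine ⟨h1.symm, fun h => h3 ?_, fun h => h2 ?_⟩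
    · rw [← neg_sub (y * x) (x * y), h]
    · rw [← neg_sub (y * x) (x * y), h, neg_neg]⟩
  loopless := ⟨fun x h => h.1 rfl⟩


/-- The center of R as a set. -/
def centerSet (R : Type*) [NonUnitalRing R] : Set R := {z | ∀ x, z * x = x * z}

/-- The induced subgraph of the r-noncommuting graph on the non-central elements. -/
def deltaGraph {R : Type*} [NonUnitalRing R] (r : R) :
    SimpleGraph {x : R // x ∉ centerSet R} :=
  (ncGraph r).comap Subtype.val

/-!
Fix a non-central `x` and let `C` be the kernel of `y ↦ x * y - y * x`, so that `Z < C < R` for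
the centre `Z`. The non-neighbours of `x` are the centre, `x` itself and the preimage of
`{r, -r}`, a union of at most two cosets of `C`; when `r = 0` they form exactly `C`. Degree `3`
thus forces `|R| = |C| + 3` or `|R| = |Z| + 4 + k |C|` with `k ≤ 2`, and together with
`|Z| ∣ |C| ∣ |R|` and `|R| ∉ {16, 18}` this leaves only `[R : Z] ∈ {5, 6, 10, 15}`. A squarefree
index makes `R ⧸ Z` cyclic, and a ring that is cyclic modulo a central subgroup is commutative.
-/

theorem isAddCyclic_of_squarefree_card {G : Type*} [AddCommGroup G] [Finite G]
    (h : Squarefree (Nat.card G)) : IsAddCyclic G := by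
  have : IsZGroup (Multiplicative G) := IsZGroup.of_squarefree h
  exact isCyclic_multiplicative_iff.mp
    (IsCyclic.of_exponent_eq_card (IsZGroup.exponent_eq_card (G := Multiplicative G)))

theorem AddSubgroup.card_lt_card_of_lt {G : Type*} [AddGroup G] [Finite G] {H K : AddSubgroup G}
    (h : H < K) : Nat.card H < Nat.card K := by
  have := Set.ncard_lt_ncard (SetLike.coe_ssubset_coe.mpr h)
  rwa [← Nat.card_coe_set_eq, ← Nat.card_coe_set_eq] at this

theorem AddMonoidHom.ncard_preimage_singleton {G H : Type*} [AddGroup G] [AddGroup H]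
    (f : G →+ H) (t : H) :
    (f ⁻¹' {t}).ncard = 0 ∨ (f ⁻¹' {t}).ncard = Nat.card f.ker := by
  rcases (f ⁻¹' {t}).eq_empty_or_nonempty with h | ⟨y, hy⟩
  · exact .inl (by rw [h, Set.ncard_empty])
  · refine .inr ?_
    have : f ⁻¹' {t} = (y + ·) '' f.ker := by
      ext u
      simp only [Set.mem_preimage, Set.mem_singleton_iff, Set.mem_image, SetLike.mem_coe,
        AddMonoidHom.mem_ker] at hy ⊢
      refine ⟨fun hu => ⟨-y + u, by simp [hu, hy], add_neg_cancel_left y u⟩, ?_⟩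
      rintro ⟨v, hv, rfl⟩
      simp [hv, hy]
    rw [this, Set.ncard_image_of_injective _ (add_right_injective y)]
    exact Nat.card_coe_set_eq _ |>.symm

theorem AddMonoidHom.exists_ncard_preimage_pair_eq {G H : Type*} [AddGroup G] [AddGroup H]
    [Finite G] (f : G →+ H) (s t : H) :
    ∃ k ≤ 2, (f ⁻¹' {s, t}).ncard = k * Nat.card f.ker := by
  by_cases hst : s = t
  · rw [hst, Set.pair_eq_singleton]
    rcases f.ncard_preimage_singleton t with h | h
    exacts [⟨0, by omega, by simp [h]⟩, ⟨1, by omega, by simp [h]⟩]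
  · rw [Set.insert_eq, Set.preimage_union, Set.ncard_union_eq
      (Set.disjoint_singleton.mpr hst |>.preimage f)]
    rcases f.ncard_preimage_singleton s with h | h <;>
      rcases f.ncard_preimage_singleton t with h' | h'
    exacts [⟨0, by omega, by simp [h, h']⟩, ⟨1, by omega, by simp [h, h']⟩,
      ⟨1, by omega, by simp [h, h']⟩, ⟨2, le_rfl, by omega⟩]

-- `z`, `c`, `n` are the orders of the centre, of a centraliser and of the ring;
-- `q` is the index of the centre.
theorem Nat.squarefree_of_card_relations {z c n q : ℕ} (hzc : z ∣ c) (hcn : c ∣ n)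
    (hzc' : z < c) (hcn' : c < n) (hq : n = q * z) (h16 : n ≠ 16) (h18 : n ≠ 18)
    (h : n = c + 3 ∨ ∃ k ≤ 2, n = z + 4 + k * c) : Squarefree q := by
  have hbound : z ≤ 4 ∧ c ≤ 8 := by
    rcases h with h | ⟨k, hk, h⟩
    · have hc3 : c ∣ 3 := (Nat.dvd_add_right (dvd_refl c)).mp (h ▸ hcn)
      have := Nat.le_of_dvd (by norm_num) hc3
      omega
    · have hz4 : z ∣ 4 := (Nat.dvd_add_right (dvd_refl z)).mp
        ((Nat.dvd_add_left (hzc.mul_left k)).mp (h ▸ hzc.trans hcn))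
      have hcz : c ∣ z + 4 := (Nat.dvd_add_left ((dvd_refl c).mul_left k)).mp (h ▸ hcn)
      have := Nat.le_of_dvd (by norm_num) hz4
      have := Nat.le_of_dvd (by omega) hcz
      omega
  have : q = 5 ∨ q = 6 ∨ q = 10 ∨ q = 15 := by
    obtain ⟨hz4, hc8⟩ := hbound
    rcases h with h | ⟨k, hk, h⟩ <;> interval_cases z <;> interval_cases c <;>
      try interval_cases k
    all_goals omega
  rcases this with rfl | rfl | rfl | rfl <;> simp [Nat.squarefree_iff_nodup_primeFactorsList]

section

variable {R : Type*} [NonUnitalRing R]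

def adHom (x : R) : R →+ R := AddMonoidHom.mulLeft x - AddMonoidHom.mulRight x

@[simp]
theorem adHom_apply (x y : R) : adHom x y = x * y - y * x := rfl

theorem coe_center_eq_centerSet : (NonUnitalSubring.center R : Set R) = centerSet R := by
  ext z
  exact Semigroup.mem_center_iff.trans (forall_congr' fun _ => eq_comm)

theorem ncard_centerSet : (centerSet R).ncard = Nat.card (NonUnitalSubring.center R) := by
  rw [← coe_center_eq_centerSet]
  exact (Nat.card_coe_set_eq _).symm

theorem center_le_ker_adHom (x : R) :
    (NonUnitalSubring.center R).toAddSubgroup ≤ (adHom x).ker := fun z hz => by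
  rw [AddMonoidHom.mem_ker, adHom_apply, Semigroup.mem_center_iff.mp hz x, sub_self]

theorem self_mem_ker_adHom (x : R) : x ∈ (adHom x).ker := by
  rw [AddMonoidHom.mem_ker, adHom_apply, sub_self]

theorem center_lt_ker_adHom {x : R} (hx : x ∉ centerSet R) :
    (NonUnitalSubring.center R).toAddSubgroup < (adHom x).ker :=
  SetLike.lt_iff_le_and_exists.mpr ⟨center_le_ker_adHom x, x, self_mem_ker_adHom x,
    fun h => hx (coe_center_eq_centerSet (R := R) ▸ h)⟩

theorem ker_adHom_lt_top {x : R} (hx : x ∉ centerSet R) : (adHom x).ker < ⊤ := by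
  refine lt_top_iff_ne_top.mpr fun h => hx fun y => ?_
  have := h ▸ AddSubgroup.mem_top y
  rwa [AddMonoidHom.mem_ker, adHom_apply, sub_eq_zero] at this

theorem commute_of_isAddCyclic_quotient (Z : AddSubgroup R)
    (hZ : ∀ z ∈ Z, ∀ a : R, Commute z a) [IsAddCyclic (R ⧸ Z)] (a b : R) : Commute a b := by
  obtain ⟨g, hg⟩ := IsAddCyclic.exists_generator (α := R ⧸ Z)
  obtain ⟨x, rfl⟩ := QuotientAddGroup.mk_surjective g
  have decomp : ∀ a : R, ∃ m : ℤ, ∃ z ∈ Z, a = z + m • x := by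
    intro a
    obtain ⟨m, hm⟩ := AddSubgroup.mem_zmultiples_iff.mp (hg a)
    refine ⟨m, a - m • x, ?_, by abel⟩
    rw [← QuotientAddGroup.eq_zero_iff, QuotientAddGroup.mk_sub, QuotientAddGroup.mk_zsmul, hm,
      sub_self]
  obtain ⟨m, z, hz, rfl⟩ := decomp a
  obtain ⟨k, w, hw, rfl⟩ := decomp b
  have hxx : Commute (m • x) (k • x) := ((Commute.refl x).smul_left m).smul_right k
  exact ((hZ z hz w).add_right (hZ z hz _)).add_left
    (((hZ w hw _).symm).add_right hxx)

theorem image_val_neighborSet_deltaGraph (r : R) (x : {a : R // a ∉ centerSet R}) :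
    Subtype.val '' (deltaGraph r).neighborSet x =
      (insert (x : R) (centerSet R ∪ adHom (x : R) ⁻¹' {r, -r}))ᶜ := by
  ext y
  simp only [Set.mem_image, SimpleGraph.mem_neighborSet, deltaGraph, SimpleGraph.comap_adj,
    ncGraph, Set.mem_compl_iff, Set.mem_insert_iff, Set.mem_union, Set.mem_preimage,
    Set.mem_singleton_iff, adHom_apply]
  constructor
  · rintro ⟨y, ⟨hne, h, h'⟩, rfl⟩
    rintro (hxy | hy | hy | hy)
    exacts [hne hxy.symm, y.2 hy, h hy, h' hy]
  · intro hy
    push Not at hy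
    exact ⟨⟨y, hy.2.1⟩, ⟨hy.1.symm, hy.2.2.1, hy.2.2.2⟩, rfl⟩

theorem ncard_neighborSet_deltaGraph_add_ncard [Finite R] (r : R)
    (x : {a : R // a ∉ centerSet R}) :
    ((deltaGraph r).neighborSet x).ncard +
      (insert (x : R) (centerSet R ∪ adHom (x : R) ⁻¹' {r, -r})).ncard = Nat.card R := by
  rw [← Set.ncard_image_of_injective _ Subtype.val_injective,
    image_val_neighborSet_deltaGraph, add_comm, Set.ncard_add_ncard_compl]

theorem card_eq_card_ker_add_ncard_neighborSet_deltaGraph [Finite R]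
    (x : {a : R // a ∉ centerSet R}) :
    Nat.card R = Nat.card (adHom (x : R)).ker + ((deltaGraph 0).neighborSet x).ncard := by
  have hB : insert (x : R) (centerSet R ∪ adHom (x : R) ⁻¹' {0, -0}) = (adHom (x : R)).ker := by
    have hcenter : centerSet R ⊆ adHom (x : R) ⁻¹' {0} := fun z hz => by simp [hz (x : R)]
    rw [neg_zero, Set.pair_eq_singleton, Set.union_eq_right.mpr hcenter,
      Set.insert_eq_of_mem (by simp), AddMonoidHom.coe_ker]
  rw [← ncard_neighborSet_deltaGraph_add_ncard 0 x, hB, ← Nat.card_coe_set_eq, add_comm]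
  rfl

theorem card_eq_add_ncard_neighborSet_deltaGraph [Finite R] {r : R} (hr : r ≠ 0)
    (x : {a : R // a ∉ centerSet R}) :
    Nat.card R = Nat.card (NonUnitalSubring.center R) + 1 +
      (adHom (x : R) ⁻¹' {r, -r}).ncard + ((deltaGraph r).neighborSet x).ncard := by
  have hdisj : ∀ z ∈ centerSet R, z ∉ adHom (x : R) ⁻¹' {r, -r} := by
    intro z hz
    simp [hz (x : R), hr, hr.symm]
  have hx : (x : R) ∉ centerSet R ∪ adHom (x : R) ⁻¹' {r, -r} := by
    rintro (h | h)
    · exact x.2 h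
    · simp [hr, hr.symm] at h
  rw [← ncard_neighborSet_deltaGraph_add_ncard r x, Set.ncard_insert_of_notMem hx,
    Set.ncard_union_eq (Set.disjoint_left.mpr hdisj), ncard_centerSet]
  ring

theorem card_eq_of_ncard_neighborSet_deltaGraph_eq_three [Finite R] {r : R}
    {x : {a : R // a ∉ centerSet R}} (hdeg : ((deltaGraph r).neighborSet x).ncard = 3) :
    Nat.card R = Nat.card (adHom (x : R)).ker + 3 ∨ ∃ k ≤ 2, Nat.card R =
      Nat.card (NonUnitalSubring.center R) + 4 + k * Nat.card (adHom (x : R)).ker := by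
  by_cases hr : r = 0
  · subst hr
    exact .inl (hdeg ▸ card_eq_card_ker_add_ncard_neighborSet_deltaGraph x)
  · obtain ⟨k, hk, ht⟩ := (adHom (x : R)).exists_ncard_preimage_pair_eq r (-r)
    have := card_eq_add_ncard_neighborSet_deltaGraph hr x
    exact .inr ⟨k, hk, by omega⟩

end

theorem stmt19_general {R : Type*} [NonUnitalRing R] [Fintype R]
    (hnc : ∃ a b : R, a * b ≠ b * a) (hcard16 : Nat.card R ≠ 16)
    (hcard18 : Nat.card R ≠ 18)
    (r : R) :
    ∀ x : {a : R // a ∉ centerSet R}, ((deltaGraph r).neighborSet x).ncard ≠ 3 := by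
  intro x hdeg
  obtain ⟨a, b, hab⟩ := hnc
  set Z := (NonUnitalSubring.center R).toAddSubgroup
  have hsq : Squarefree (Nat.card (R ⧸ Z)) :=
    Nat.squarefree_of_card_relations
      (AddSubgroup.card_dvd_of_le (center_le_ker_adHom (x : R)))
      (AddSubgroup.card_addSubgroup_dvd_card _)
      (AddSubgroup.card_lt_card_of_lt (center_lt_ker_adHom x.2))
      (by simpa using AddSubgroup.card_lt_card_of_lt (ker_adHom_lt_top x.2))
      (AddSubgroup.card_eq_card_quotient_mul_card_addSubgroup Z) hcard16 hcard18
      (card_eq_of_ncard_neighborSet_deltaGraph_eq_three hdeg)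
  have : IsAddCyclic (R ⧸ Z) := isAddCyclic_of_squarefree_card hsq
  exact hab (commute_of_isAddCyclic_quotient Z
    (fun z hz c => (Semigroup.mem_center_iff.mp hz c).symm) a b)

/-- if R is noncommutative with |R| ≠ 16, 18 and r ∈ K(R), then Δ_R^r
has no vertex of degree 3. -/
theorem stmt19 {R : Type*} [NonUnitalRing R] [Fintype R]
    (hnc : ∃ a b : R, a * b ≠ b * a) (hcard16 : Nat.card R ≠ 16)
    (hcard18 : Nat.card R ≠ 18)
    (r : R) (hr : ∃ a b : R, a * b - b * a = r) :
    ∀ x : {a : R // a ∉ centerSet R}, ((deltaGraph r).neighborSet x).ncard ≠ 3 :=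
  stmt19_general hnc hcard16 hcard18 r
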